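/- arXiv:1403.1126 — 2 statements merged into one kernel-verified Lean document; each statement's English description precedes it below -/
import Mathlib

section
/- Let G ⊂ ℂⁿ be open and let Pₖ be polynomials converging uniformly on G in the chordal metric to f : G → ℂ ∪ {∞} with f(G) ⊂ ℂ. Then f is holomorphic on G. -/
/-!
Where `f` is bounded, chordal closeness of finite values is comparable to Euclidean closeness,
and `f` is bounded near each point of `G` because it is chordally close to a single continuous
`Pₖ`. So the `Pₖ` converge to `f` locally uniformly in the Euclidean metric. By the Cauchy
estimates their derivatives then converge locally uniformly as well, and the limit of the
derivatives is the derivative of `f`.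
-/

open Metric Set Filter Topology

/-- The chordal distance on the Riemann sphere `ℂ ∪ {∞} = OnePoint ℂ`. -/
noncomputable def chordal (a b : OnePoint ℂ) : ℝ :=
  Option.rec
    (Option.rec 0 (fun y => 1 / Real.sqrt (1 + ‖y‖ ^ 2)) b)
    (fun x => Option.rec (1 / Real.sqrt (1 + ‖x‖ ^ 2))
      (fun y => ‖x - y‖ /
        (Real.sqrt (1 + ‖x‖ ^ 2) * Real.sqrt (1 + ‖y‖ ^ 2))) b) a

lemma chordal_coe (x y : ℂ) :
    chordal x y = ‖x - y‖ / (Real.sqrt (1 + ‖x‖ ^ 2) * Real.sqrt (1 + ‖y‖ ^ 2)) :=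
  rfl

lemma chordal_coe_comm (x y : ℂ) : chordal x y = chordal y x := by
  rw [chordal_coe, chordal_coe, mul_comm, norm_sub_rev]

lemma sqrt_one_add_sq_le_one_add {t : ℝ} (ht : 0 ≤ t) : Real.sqrt (1 + t ^ 2) ≤ 1 + t :=
  Real.sqrt_le_iff.mpr ⟨by linarith, by nlinarith⟩

lemma norm_sub_lt_of_chordal_lt {x y : ℂ} {c : ℝ} (h : chordal x y < c) :
    ‖x - y‖ < c * (1 + ‖x‖) * (1 + ‖y‖) := by
  have hpos : 0 < Real.sqrt (1 + ‖x‖ ^ 2) * Real.sqrt (1 + ‖y‖ ^ 2) := by positivity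
  rw [chordal_coe, div_lt_iff₀ hpos] at h
  have hc : 0 ≤ c := by nlinarith [norm_nonneg (x - y)]
  calc ‖x - y‖ < c * (Real.sqrt (1 + ‖x‖ ^ 2) * Real.sqrt (1 + ‖y‖ ^ 2)) := h
    _ ≤ c * ((1 + ‖x‖) * (1 + ‖y‖)) := by
      gcongr <;> exact sqrt_one_add_sq_le_one_add (norm_nonneg _)
    _ = c * (1 + ‖x‖) * (1 + ‖y‖) := by ring

lemma norm_le_of_chordal_lt_of_norm_le {x y : ℂ} {B : ℝ} (hy : ‖y‖ ≤ B)
    (h : chordal x y < 1 / (2 * (1 + B))) : ‖x‖ ≤ 2 * B + 1 := by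
  have hB : 0 < 1 + B := by linarith [norm_nonneg y]
  have hxy : ‖x - y‖ < (1 + ‖x‖) / 2 :=
    calc ‖x - y‖ < 1 / (2 * (1 + B)) * (1 + ‖x‖) * (1 + ‖y‖) := norm_sub_lt_of_chordal_lt h
      _ ≤ 1 / (2 * (1 + B)) * (1 + ‖x‖) * (1 + B) := by gcongr
      _ = (1 + ‖x‖) / 2 := by field_simp
  linarith [norm_le_norm_add_norm_sub' x y]

section ChordalConvergence

variable {ι X : Type*} {F : ι → X → ℂ} {f : X → ℂ} {l : Filter ι} {s : Set X}

def ChordalTendstoUniformlyOn (F : ι → X → ℂ) (f : X → ℂ) (l : Filter ι) (s : Set X) : Prop :=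
  ∀ ε > 0, ∀ᶠ k in l, ∀ z ∈ s, chordal (F k z) (f z) < ε

lemma ChordalTendstoUniformlyOn.mono {t : Set X} (h : ChordalTendstoUniformlyOn F f l s)
    (hts : t ⊆ s) : ChordalTendstoUniformlyOn F f l t :=
  fun ε hε => (h ε hε).mono fun _ hk z hz => hk z (hts hz)

lemma ChordalTendstoUniformlyOn.tendstoUniformlyOn_of_norm_le {B : ℝ}
    (h : ChordalTendstoUniformlyOn F f l s) (hB : ∀ z ∈ s, ‖f z‖ ≤ B) :
    TendstoUniformlyOn F f l s := by
  obtain rfl | ⟨z₀, hz₀⟩ := s.eq_empty_or_nonempty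
  · exact tendstoUniformlyOn_empty
  have hB₀ : 0 ≤ B := (norm_nonneg _).trans (hB z₀ hz₀)
  rw [Metric.tendstoUniformlyOn_iff]
  intro ε hε
  set δ := min (1 / (2 * (1 + B))) (ε / ((2 * B + 2) * (1 + B)))
  filter_upwards [h δ (by positivity)] with k hk z hz
  have hFk : ‖F k z‖ ≤ 2 * B + 1 :=
    norm_le_of_chordal_lt_of_norm_le (hB z hz) ((hk z hz).trans_le (min_le_left _ _))
  rw [dist_comm, dist_eq_norm]
  calc ‖F k z - f z‖ < δ * (1 + ‖F k z‖) * (1 + ‖f z‖) := norm_sub_lt_of_chordal_lt (hk z hz)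
    _ ≤ ε / ((2 * B + 2) * (1 + B)) * (1 + (2 * B + 1)) * (1 + B) := by
      gcongr
      · exact min_le_right _ _
      · exact hB z hz
    _ = ε := by field_simp; ring

lemma ChordalTendstoUniformlyOn.exists_eventually_norm_le [TopologicalSpace X] [l.NeBot]
    {x : X} (h : ChordalTendstoUniformlyOn F f l s) (hF : ∀ k, ContinuousWithinAt (F k) s x)
    (hx : x ∈ s) : ∃ B, ∀ᶠ z in 𝓝[s] x, ‖f z‖ ≤ B := by
  set A := 2 * ‖f x‖ + 1
  set c := min (1 / (2 * (1 + ‖f x‖))) (1 / (2 * (1 + (A + 1))))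
  obtain ⟨k, hk⟩ := (h c (by positivity)).exists
  have hFkx : ‖F k x‖ ≤ A :=
    norm_le_of_chordal_lt_of_norm_le le_rfl ((hk x hx).trans_le (min_le_left _ _))
  have hFk : ∀ᶠ z in 𝓝[s] x, ‖F k z‖ < A + 1 :=
    (hF k).norm.eventually_lt_const (by linarith)
  refine ⟨2 * (A + 1) + 1, ?_⟩
  filter_upwards [hFk, self_mem_nhdsWithin] with z hFkz hz
  refine norm_le_of_chordal_lt_of_norm_le hFkz.le ?_
  rw [chordal_coe_comm]
  exact (hk z hz).trans_le (min_le_right _ _)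

lemma ChordalTendstoUniformlyOn.tendstoLocallyUniformlyOn [TopologicalSpace X] [l.NeBot]
    (h : ChordalTendstoUniformlyOn F f l s) (hF : ∀ k, ContinuousOn (F k) s) :
    TendstoLocallyUniformlyOn F f l s := by
  refine tendstoLocallyUniformlyOn_of_forall_exists_nhds fun x hx => ?_
  obtain ⟨B, hB⟩ := h.exists_eventually_norm_le (fun k => hF k x hx) hx
  exact ⟨{z ∈ s | ‖f z‖ ≤ B}, inter_mem self_mem_nhdsWithin hB,
    (h.mono (sep_subset s _)).tendstoUniformlyOn_of_norm_le fun _ hz => hz.2⟩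

end ChordalConvergence

section UniformLimit

variable {ι E V : Type*} [NormedAddCommGroup E] [NormedSpace ℂ E] [NormedAddCommGroup V]
  [NormedSpace ℂ V] {F : ι → E → V} {f : E → V} {l : Filter ι} {c : E} {R : ℝ}

lemma uniformCauchySeqOn_fderiv_ball (hR : 0 < R) (hF : ∀ k, DifferentiableOn ℂ (F k) (ball c R))
    (hcauchy : UniformCauchySeqOn F l (ball c R)) :
    UniformCauchySeqOn (fun k => fderiv ℂ (F k)) l (ball c (R / 2)) := by
  intro U hU
  obtain ⟨ε, hε, hεU⟩ := Metric.mem_uniformity_dist.mp hU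
  filter_upwards [hcauchy _ (dist_mem_uniformity (show 0 < R * ε / 8 by positivity))]
    with km hkm z hz
  obtain ⟨k, m⟩ := km
  apply hεU
  have hzR : ball z (R / 2) ⊆ ball c R :=
    ball_subset_ball' (by linarith [mem_ball.mp hz])
  have hsmall : ∀ w ∈ ball z (R / 2), ‖(F k - F m) w‖ < R * ε / 8 := fun w hw => by
    simpa [dist_eq_norm] using hkm w (hzR hw)
  have hmaps : MapsTo (F k - F m) (ball z (R / 2)) (closedBall ((F k - F m) z) (R * ε / 4)) := by
    intro w hw
    rw [mem_closedBall, dist_eq_norm]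
    linarith [norm_sub_le ((F k - F m) w) ((F k - F m) z), hsmall w hw,
      hsmall z (mem_ball_self (half_pos hR))]
  have hcauchyEst := Complex.norm_fderiv_le_div_of_mapsTo_ball
    (((hF k).sub (hF m)).mono hzR) hmaps (half_pos hR)
  have hzc : ball c R ∈ 𝓝 z := isOpen_ball.mem_nhds (hzR (mem_ball_self (half_pos hR)))
  rw [fderiv_sub ((hF k).differentiableAt hzc) ((hF m).differentiableAt hzc)] at hcauchyEst
  rw [dist_eq_norm]
  calc _ ≤ R * ε / 4 / (R / 2) := hcauchyEst
    _ = ε / 2 := by field_simp; ring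
    _ < ε := half_lt_self hε

lemma differentiableAt_of_tendstoUniformlyOn_ball [CompleteSpace V] [l.NeBot] (hR : 0 < R)
    (hF : ∀ k, DifferentiableOn ℂ (F k) (ball c R)) (hlim : TendstoUniformlyOn F f l (ball c R)) :
    DifferentiableAt ℂ f c := by
  have hF' := uniformCauchySeqOn_fderiv_ball hR hF hlim.uniformCauchySeqOn
  have hball : ball c (R / 2) ⊆ ball c R := ball_subset_ball (half_le_self hR.le)
  choose! f' hf' using fun z (hz : z ∈ ball c (R / 2)) => CompleteSpace.complete (hF'.cauchy_map hz)
  exact (hasFDerivAt_of_tendstoUniformlyOn isOpen_ball (hF'.tendstoUniformlyOn_of_tendsto hf')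
    (fun k z hz => ((hF k).differentiableAt (isOpen_ball.mem_nhds (hball hz))).hasFDerivAt)
    (fun z hz => hlim.tendsto_at (hball hz)) (mem_ball_self (half_pos hR))).differentiableAt

lemma TendstoLocallyUniformlyOn.differentiableOn_of_locallyCompactSpace [LocallyCompactSpace E]
    [CompleteSpace V] [l.NeBot] {U : Set E} (hlim : TendstoLocallyUniformlyOn F f l U)
    (hF : ∀ k, DifferentiableOn ℂ (F k) U) (hU : IsOpen U) : DifferentiableOn ℂ f U := by
  intro x hx
  have hTFAE := (tendstoLocallyUniformlyOn_TFAE F f l hU).out 0 2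
  obtain ⟨t, ht, hlimt⟩ := hTFAE.mp hlim x hx
  rw [hU.nhdsWithin_eq hx] at ht
  obtain ⟨R, hR, hRt⟩ := Metric.mem_nhds_iff.mp (inter_mem ht (hU.mem_nhds hx))
  exact (differentiableAt_of_tendstoUniformlyOn_ball hR
    (fun k => (hF k).mono (hRt.trans inter_subset_right))
    (hlimt.mono (hRt.trans inter_subset_left))).differentiableWithinAt

end UniformLimit

/-- If `G ⊂ ℂⁿ` is open and polynomials `Pₖ` converge uniformly on `G` in the chordal metric
to a finite-valued function `f : G → ℂ`, then `f` is holomorphic on `G`. -/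
theorem stmt16 (n : ℕ) (G : Set (Fin n → ℂ)) (hGo : IsOpen G)
    (P : ℕ → MvPolynomial (Fin n) ℂ) (f : (Fin n → ℂ) → ℂ)
    (hconv : ∀ ε > 0, ∃ K : ℕ, ∀ k ≥ K, ∀ z ∈ G,
      chordal ((MvPolynomial.eval z (P k) : ℂ) : OnePoint ℂ) ((f z : ℂ) : OnePoint ℂ) < ε) :
    DifferentiableOn ℂ f G := by
  have hP : ∀ k, Differentiable ℂ fun z => MvPolynomial.eval z (P k) := fun k =>
    differentiableOn_univ.mp (AnalyticOnNhd.eval_mvPolynomial (P k)).differentiableOn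
  have hchordal : ChordalTendstoUniformlyOn (fun k z => MvPolynomial.eval z (P k)) f atTop G :=
    fun ε hε => eventually_atTop.mpr (hconv ε hε)
  exact (hchordal.tendstoLocallyUniformlyOn fun k => (hP k).continuous.continuousOn)
    |>.differentiableOn_of_locallyCompactSpace (fun k => (hP k).differentiableOn) hGo
end

section
/- Let Gᵢ ⊂ ℂ, i ∈ I, be Jordan domains, G = ∏ᵢ Gᵢ and closure(G) = ∏ᵢ closure(Gᵢ) with the product topology. If f : closure(G) → ℂ ∪ {∞} is a χ-uniform limit on closure(G) of polynomials, then either f ≡ ∞, or f is continuous on closure(G), f(G) ⊂ ℂ, and f is separately holomorphic on G. -/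
/-- A Jordan domain: the bounded connected component of the complement of a Jordan curve
(a homeomorphic image of the unit circle) in `ℂ`. -/
def IsJordanDomain (G : Set ℂ) : Prop :=
  ∃ C : Set ℂ, Nonempty (↥(Metric.sphere (0:ℂ) 1) ≃ₜ ↥C) ∧
    Bornology.IsBounded G ∧ ∃ z ∈ Cᶜ, G = connectedComponentIn Cᶜ z

open Complex OnePoint Set Filter Topology Metric Function

@[simp] lemma chordal_coe_coe (x y : ℂ) : chordal (x : OnePoint ℂ) (y : OnePoint ℂ) =
    ‖x - y‖ / (√(1 + ‖x‖ ^ 2) * √(1 + ‖y‖ ^ 2)) := rfl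

@[simp] lemma chordal_coe_infty (x : ℂ) : chordal (x : OnePoint ℂ) ∞ = 1 / √(1 + ‖x‖ ^ 2) := rfl

@[simp] lemma chordal_infty_coe (y : ℂ) : chordal ∞ (y : OnePoint ℂ) = 1 / √(1 + ‖y‖ ^ 2) := rfl

@[simp] lemma chordal_infty_infty : chordal (∞ : OnePoint ℂ) ∞ = 0 := rfl

/-- Inverse stereographic projection onto the sphere of diameter `1` resting on the origin of
`ℝ³`; chordal distances are distances on this sphere. -/
noncomputable def toSphere (a : OnePoint ℂ) : EuclideanSpace ℝ (Fin 3) :=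
  OnePoint.rec !₂[0, 0, 1]
    (fun z => !₂[z.re / (1 + normSq z), z.im / (1 + normSq z), normSq z / (1 + normSq z)]) a

lemma chordal_eq_dist (a b : OnePoint ℂ) : chordal a b = dist (toSphere a) (toSphere b) := by
  have hnonneg : 0 ≤ chordal a b := by
    induction a using OnePoint.rec <;> induction b using OnePoint.rec <;>
      simp only [chordal_coe_coe, chordal_coe_infty, chordal_infty_coe, chordal_infty_infty] <;>
      positivity
  rw [← sq_eq_sq₀ hnonneg dist_nonneg, EuclideanSpace.dist_eq, Real.sq_sqrt (by positivity),
    Fin.sum_univ_three]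
  have hsq : ∀ z : ℂ, ‖z‖ ^ 2 = z.re ^ 2 + z.im ^ 2 := fun z => by
    rw [← normSq_eq_norm_sq, normSq_apply]; ring
  induction a using OnePoint.rec <;> induction b using OnePoint.rec <;>
    simp (disch := positivity) only [chordal_coe_coe, chordal_coe_infty, chordal_infty_coe,
      chordal_infty_infty, toSphere, OnePoint.rec, normSq_apply, Real.dist_eq, sq_abs, div_pow,
      mul_pow, Real.sq_sqrt, hsq, sub_re, sub_im,
      Matrix.cons_val_zero, Matrix.cons_val_one, Matrix.cons_val_two, Matrix.head_cons,
      Matrix.tail_cons, PiLp.toLp_apply]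
  · norm_num
  all_goals
    field_simp
    ring

lemma chordal_nonneg (a b : OnePoint ℂ) : 0 ≤ chordal a b :=
  chordal_eq_dist a b ▸ dist_nonneg

lemma chordal_triangle (a b c : OnePoint ℂ) : chordal a c ≤ chordal a b + chordal b c := by
  simpa only [chordal_eq_dist] using dist_triangle _ _ _

lemma chordal_comm (a b : OnePoint ℂ) : chordal a b = chordal b a := by
  simp only [chordal_eq_dist, dist_comm]

lemma continuous_toSphere : Continuous toSphere := by
  rw [OnePoint.continuous_iff, coclosedCompact_eq_cocompact]
  constructor
  · rw [tendsto_iff_dist_tendsto_zero]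
    simp only [← chordal_eq_dist, chordal_coe_infty, one_div]
    exact tendsto_inv_atTop_zero.comp <| Real.tendsto_sqrt_atTop.comp <|
      tendsto_atTop_add_const_left _ _ <| (tendsto_pow_atTop two_ne_zero).comp
        tendsto_norm_cocompact_atTop
  · refine (PiLp.continuous_toLp 2 _).comp (continuous_pi fun j => ?_)
    have h : ∀ z : ℂ, 1 + normSq z ≠ 0 := fun z => by have := normSq_nonneg z; positivity
    fin_cases j <;> fun_prop (disch := exact h _)

lemma injective_toSphere : Injective toSphere := by
  intro a b h
  have h0 : chordal a b = 0 := by rw [chordal_eq_dist, h, dist_self]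
  have hs : ∀ z : ℂ, √(1 + ‖z‖ ^ 2) ≠ 0 := fun z => by positivity
  induction a using OnePoint.rec <;> induction b using OnePoint.rec <;>
    simp_all [div_eq_zero_iff, sub_eq_zero]

lemma isEmbedding_toSphere : IsEmbedding toSphere :=
  (continuous_toSphere.isClosedEmbedding injective_toSphere).isEmbedding

lemma norm_sub_eq_chordal_mul (x y : ℂ) :
    ‖x - y‖ = chordal x y * (√(1 + ‖x‖ ^ 2) * √(1 + ‖y‖ ^ 2)) := by
  rw [chordal_coe_coe, div_mul_cancel₀ _ (by positivity)]

lemma exists_pos_forall_chordal_lt_imp_norm_sub_lt (M : ℝ) {ε : ℝ} (hε : 0 < ε) :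
    ∃ δ > 0, ∀ a y : ℂ, ‖a‖ ≤ M → chordal y a < δ → ‖y - a‖ < ε := by
  set S := √(1 + M ^ 2)
  have hS : 0 < S := by positivity
  refine ⟨min (1 / (2 * S)) (ε / (2 * S ^ 2)), by positivity, fun a y ha hya => ?_⟩
  have hsa : √(1 + ‖a‖ ^ 2) ≤ S :=
    Real.sqrt_le_sqrt (by linarith [pow_le_pow_left₀ (norm_nonneg a) ha 2])
  -- `y` stays away from `∞` because `a` does
  have hsy : √(1 + ‖y‖ ^ 2) < 2 * S := by
    have htri := chordal_triangle a y ∞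
    have hay : chordal a y < 1 / (2 * S) := chordal_comm a y ▸ hya.trans_le (min_le_left _ _)
    have h1 : 1 / S ≤ chordal a ∞ := by rw [chordal_coe_infty]; gcongr
    have h2 : 1 / (2 * S) < chordal y ∞ := by
      have : 1 / S = 1 / (2 * S) + 1 / (2 * S) := by field_simp; norm_num
      linarith
    rw [chordal_coe_infty] at h2
    exact lt_of_one_div_lt_one_div (by positivity) h2
  calc ‖y - a‖ = chordal y a * (√(1 + ‖y‖ ^ 2) * √(1 + ‖a‖ ^ 2)) := norm_sub_eq_chordal_mul y a
    _ ≤ chordal y a * (2 * S * S) := by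
        have := chordal_nonneg y a
        gcongr
    _ < ε / (2 * S ^ 2) * (2 * S * S) := by
        gcongr
        exact hya.trans_le (min_le_right _ _)
    _ = ε := by field_simp

lemma one_le_norm_of_chordal_infty_le {y : ℂ} (h : chordal y ∞ ≤ 1 / 2) : 1 ≤ ‖y‖ := by
  rw [chordal_coe_infty] at h
  have h2 : 2 ≤ √(1 + ‖y‖ ^ 2) := le_of_one_div_le_one_div (by positivity) h
  have h4 : 4 ≤ 1 + ‖y‖ ^ 2 := by
    have := Real.sq_sqrt (by positivity : 0 ≤ 1 + ‖y‖ ^ 2)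
    nlinarith
  nlinarith [norm_nonneg y]

lemma sqrt_one_add_sq_le {t : ℝ} (ht : 1 ≤ t) : √(1 + t ^ 2) ≤ √2 * t := by
  rw [← Real.sqrt_sq (by linarith : 0 ≤ t), ← Real.sqrt_mul zero_le_two, Real.sqrt_sq (by linarith)]
  gcongr
  nlinarith

lemma norm_inv_sub_inv_le_two_mul_chordal {x y : ℂ} (hx : 1 ≤ ‖x‖) (hy : 1 ≤ ‖y‖) :
    ‖x⁻¹ - y⁻¹‖ ≤ 2 * chordal x y := by
  have hx0 : 0 < ‖x‖ := by linarith
  have hy0 : 0 < ‖y‖ := by linarith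
  rw [inv_sub_inv (norm_pos_iff.1 hx0) (norm_pos_iff.1 hy0), norm_div, norm_sub_rev, norm_mul,
    norm_sub_eq_chordal_mul, div_le_iff₀ (by positivity)]
  have := chordal_nonneg x y
  calc chordal x y * (√(1 + ‖x‖ ^ 2) * √(1 + ‖y‖ ^ 2))
      ≤ chordal x y * (√2 * ‖x‖ * (√2 * ‖y‖)) := by
        gcongr <;> exact sqrt_one_add_sq_le ‹_›
    _ = 2 * chordal x y * (‖x‖ * ‖y‖) := by
        rw [show √2 * ‖x‖ * (√2 * ‖y‖) = (√2 * √2) * (‖x‖ * ‖y‖) by ring,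
          Real.mul_self_sqrt zero_le_two]
        ring

lemma norm_inv_le_two_mul_chordal_infty {x : ℂ} (hx : 1 ≤ ‖x‖) : ‖x⁻¹‖ ≤ 2 * chordal x ∞ := by
  have hx0 : 0 < ‖x‖ := by linarith
  rw [norm_inv, chordal_coe_infty, mul_one_div, inv_eq_one_div,
    div_le_div_iff₀ hx0 (by positivity)]
  calc 1 * √(1 + ‖x‖ ^ 2) ≤ √2 * ‖x‖ := by rw [one_mul]; exact sqrt_one_add_sq_le hx
    _ ≤ 2 * ‖x‖ := by
        gcongr
        rw [Real.sqrt_le_left (by norm_num)]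
        norm_num

noncomputable def finitePart (a : OnePoint ℂ) : ℂ := OnePoint.rec 0 id a

@[simp] lemma finitePart_coe (x : ℂ) : finitePart x = x := rfl

@[simp] lemma finitePart_infty : finitePart ∞ = 0 := rfl

lemma coe_finitePart {a : OnePoint ℂ} (h : a ≠ ∞) : (finitePart a : OnePoint ℂ) = a := by
  induction a using OnePoint.rec
  · exact absurd rfl h
  · rfl

lemma continuousAt_finitePart (x : ℂ) : ContinuousAt finitePart x :=
  OnePoint.continuousAt_coe.2 continuousAt_id

/-- Since `finitePart ∞ = 0` and `0⁻¹ = 0`, `(finitePart b)⁻¹` is `1 / b` also at `b = ∞`. -/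
lemma norm_inv_sub_inv_finitePart_le {y : ℂ} {b : OnePoint ℂ} (hy : chordal y ∞ ≤ 1 / 2)
    (hb : chordal b ∞ ≤ 1 / 2) : ‖y⁻¹ - (finitePart b)⁻¹‖ ≤ 2 * chordal y b := by
  induction b using OnePoint.rec with
  | infty =>
    simpa using norm_inv_le_two_mul_chordal_infty (one_le_norm_of_chordal_infty_le hy)
  | coe a =>
    exact norm_inv_sub_inv_le_two_mul_chordal (one_le_norm_of_chordal_infty_le hy)
      (one_le_norm_of_chordal_infty_le hb)

section UniformConvergence

variable {ι α : Type*} {p : Filter ι}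

lemma tendstoUniformlyOn_toSphere_iff {G : ι → α → OnePoint ℂ} {F : α → OnePoint ℂ}
    {s : Set α} :
    TendstoUniformlyOn (fun k x => toSphere (G k x)) (fun x => toSphere (F x)) p s ↔
      ∀ ε > 0, ∀ᶠ k in p, ∀ x ∈ s, chordal (G k x) (F x) < ε := by
  simp only [Metric.tendstoUniformlyOn_iff, ← chordal_eq_dist, chordal_comm (F _)]

lemma continuousOn_of_tendstoLocallyUniformlyOn_toSphere [TopologicalSpace α] [p.NeBot]
    {q : ι → α → ℂ} {F : α → OnePoint ℂ} {U : Set α} (hq : ∀ k, ContinuousOn (q k) U)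
    (hconv : TendstoLocallyUniformlyOn (fun k x => toSphere (q k x)) (fun x => toSphere (F x))
      p U) : ContinuousOn F U :=
  isEmbedding_toSphere.continuousOn_iff.2 <| hconv.continuousOn <| Frequently.of_forall fun k =>
    (continuous_toSphere.comp OnePoint.continuous_coe).comp_continuousOn (hq k)

lemma tendstoLocallyUniformlyOn_of_toSphere [TopologicalSpace α] {q : ι → α → ℂ} {φ : α → ℂ}
    {U : Set α} (hφ : ContinuousOn φ U)
    (h : TendstoLocallyUniformlyOn (fun k x => toSphere (q k x)) (fun x => toSphere (φ x)) p U) :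
    TendstoLocallyUniformlyOn q φ p U := by
  rw [Metric.tendstoLocallyUniformlyOn_iff] at h ⊢
  intro ε hε x hx
  obtain ⟨δ, hδ, hδε⟩ := exists_pos_forall_chordal_lt_imp_norm_sub_lt (‖φ x‖ + 1) hε
  obtain ⟨t, ht, hev⟩ := h δ hδ x hx
  have hbdd : ∀ᶠ y in 𝓝[U] x, ‖φ y‖ < ‖φ x‖ + 1 :=
    (hφ x hx).norm.eventually (eventually_lt_nhds (lt_add_one _))
  refine ⟨t ∩ {y | ‖φ y‖ < ‖φ x‖ + 1}, inter_mem ht hbdd, ?_⟩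
  filter_upwards [hev] with k hk y hy
  rw [dist_comm, dist_eq_norm]
  exact hδε _ _ hy.2.le (by rw [chordal_eq_dist, dist_comm]; exact hk y hy.1)

lemma tendstoUniformlyOn_inv_of_chordal_infty_lt {q : ι → α → ℂ} {F : α → OnePoint ℂ}
    {s : Set α} (hF : ∀ x ∈ s, chordal (F x) ∞ < 1 / 4)
    (h : TendstoUniformlyOn (fun k x => toSphere (q k x)) (fun x => toSphere (F x)) p s) :
    (∀ᶠ k in p, ∀ x ∈ s, q k x ≠ 0) ∧
      TendstoUniformlyOn (fun k x => (q k x)⁻¹) (fun x => (finitePart (F x))⁻¹) p s := by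
  have hinfty : ∀ᶠ k in p, ∀ x ∈ s, chordal (q k x) ∞ ≤ 1 / 2 := by
    filter_upwards [tendstoUniformlyOn_toSphere_iff.1 h (1 / 4) (by norm_num)] with k hk x hx
    linarith [chordal_triangle (q k x) (F x) ∞, hk x hx, hF x hx]
  refine ⟨?_, Metric.tendstoUniformlyOn_iff.2 fun ε hε => ?_⟩
  · filter_upwards [hinfty] with k hk x hx
    exact norm_pos_iff.1 (one_pos.trans_le (one_le_norm_of_chordal_infty_le (hk x hx)))
  · filter_upwards [hinfty, tendstoUniformlyOn_toSphere_iff.1 h (ε / 2) (by positivity)]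
      with k hk hk' x hx
    rw [dist_comm, dist_eq_norm]
    linarith [norm_inv_sub_inv_finitePart_le (b := F x) (hk x hx) (by linarith [hF x hx]),
      hk' x hx]

end UniformConvergence

/-- Minimum modulus principle: the maximum modulus principle for `1 / g`. -/
lemma le_norm_of_forall_mem_sphere_le_norm {g : ℂ → ℂ} {w₀ : ℂ} {ρ c : ℝ} (hρ : 0 < ρ)
    (hg : DifferentiableOn ℂ g (closedBall w₀ ρ)) (hne : ∀ w ∈ closedBall w₀ ρ, g w ≠ 0)
    (hc : ∀ w ∈ sphere w₀ ρ, c ≤ ‖g w‖) : c ≤ ‖g w₀‖ := by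
  rcases le_or_gt c 0 with hc0 | hc0
  · exact hc0.trans (norm_nonneg _)
  have hinv : DiffContOnCl ℂ (fun w => (g w)⁻¹) (ball w₀ ρ) :=
    DifferentiableOn.diffContOnCl (closure_ball w₀ hρ.ne' ▸ hg.inv hne)
  have hle : ‖(g w₀)⁻¹‖ ≤ c⁻¹ := by
    refine Complex.norm_le_of_forall_mem_frontier_norm_le isBounded_ball hinv (fun w hw => ?_)
      (subset_closure (mem_ball_self hρ))
    rw [frontier_ball w₀ hρ.ne'] at hw
    rw [norm_inv]
    exact inv_anti₀ hc0 (hc w hw)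
  rw [norm_inv] at hle
  exact (inv_le_inv₀ (norm_pos_iff.2 (hne w₀ (mem_closedBall_self hρ.le))) hc0).1 hle

lemma eventually_eq_zero_of_tendstoUniformlyOn {ι : Type*} {p : Filter ι} [p.NeBot]
    {h : ι → ℂ → ℂ} {ψ : ℂ → ℂ} {w₀ : ℂ} {r : ℝ} (hr : 0 < r)
    (hh : ∀ᶠ k in p, DifferentiableOn ℂ (h k) (closedBall w₀ r) ∧
      ∀ w ∈ closedBall w₀ r, h k w ≠ 0)
    (hconv : TendstoUniformlyOn h ψ p (closedBall w₀ r)) (hψ : ψ w₀ = 0) :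
    ∀ᶠ w in 𝓝 w₀, ψ w = 0 := by
  have hψd : DifferentiableOn ℂ ψ (ball w₀ r) :=
    (hconv.mono ball_subset_closedBall).tendstoLocallyUniformlyOn.differentiableOn
      (hh.mono fun k hk => hk.1.mono ball_subset_closedBall) isOpen_ball
  refine ((hψd.analyticAt (ball_mem_nhds w₀ hr)).eventually_eq_zero_or_eventually_ne_zero
    ).resolve_right fun hne => ?_
  -- Were `w₀` an isolated zero of `ψ`, then on a small circle around it `‖h k‖` would be bounded
  -- below by `min ‖ψ‖ / 2`; by the minimum modulus principle so would `‖h k w₀‖ ≈ ‖ψ w₀‖ = 0`.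
  obtain ⟨ρ, hρ, hρr, hsphere⟩ : ∃ ρ > 0, ρ < r ∧ ∀ w ∈ sphere w₀ ρ, ψ w ≠ 0 := by
    obtain ⟨t, ht, htψ⟩ := Metric.eventually_nhds_iff.1 (eventually_nhdsWithin_iff.1 hne)
    have hρ : 0 < min (t / 2) (r / 2) := by positivity
    refine ⟨_, hρ, (min_le_right _ _).trans_lt (half_lt_self hr), fun w hw => htψ ?_ ?_⟩
    · rw [mem_sphere.1 hw]
      exact (min_le_left _ _).trans_lt (half_lt_self ht)
    · rintro rfl
      exact hρ.ne (by simpa using hw)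
  obtain ⟨w₁, hw₁, hmin⟩ := (isCompact_sphere w₀ ρ).exists_isMinOn
    (NormedSpace.sphere_nonempty.2 hρ.le) (hψd.continuousOn.norm.mono
      (sphere_subset_closedBall.trans (closedBall_subset_ball hρr)))
  have hm : 0 < ‖ψ w₁‖ := norm_pos_iff.2 (hsphere w₁ hw₁)
  obtain ⟨k, hk, hkψ⟩ :=
    (hh.and (Metric.tendstoUniformlyOn_iff.1 hconv (‖ψ w₁‖ / 2) (by positivity))).exists
  have hsub : closedBall w₀ ρ ⊆ closedBall w₀ r := closedBall_subset_closedBall hρr.le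
  have hcentre : ‖ψ w₁‖ / 2 ≤ ‖h k w₀‖ := by
    refine le_norm_of_forall_mem_sphere_le_norm hρ (hk.1.mono hsub) (fun w hw => hk.2 w (hsub hw))
      fun w hw => ?_
    have hw' := hkψ w (hsub (sphere_subset_closedBall hw))
    rw [dist_eq_norm] at hw'
    have h1 : ‖ψ w₁‖ ≤ ‖ψ w‖ := hmin hw
    have h2 := norm_sub_norm_le (ψ w) (h k w)
    linarith
  have := hkψ w₀ (mem_closedBall_self hr.le)
  rw [hψ, dist_zero_left] at this
  linarith

section OneVariable

variable {U : Set ℂ} {q : ℕ → ℂ → ℂ} {F : ℂ → OnePoint ℂ}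

lemma eventually_eq_infty_of_tendstoLocallyUniformlyOn (hU : IsOpen U)
    (hq : ∀ k, DifferentiableOn ℂ (q k) U)
    (hconv : TendstoLocallyUniformlyOn (fun k w => toSphere (q k w)) (fun w => toSphere (F w))
      atTop U) {w₀ : ℂ} (hw₀ : w₀ ∈ U) (hF : F w₀ = ∞) :
    ∀ᶠ w in 𝓝 w₀, F w = ∞ := by
  have hFc := continuousOn_of_tendstoLocallyUniformlyOn_toSphere (fun k => (hq k).continuousOn)
    hconv
  have hnear : ∀ᶠ w in 𝓝 w₀, w ∈ U ∧ chordal (F w) ∞ < 1 / 4 := by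
    filter_upwards [hU.mem_nhds hw₀, (continuous_toSphere.continuousAt.comp
      (hFc.continuousAt (hU.mem_nhds hw₀))).eventually
        (ball_mem_nhds _ (by norm_num : (0 : ℝ) < 1 / 4))] with w hwU hw
    exact ⟨hwU, by rwa [chordal_eq_dist, ← hF]⟩
  obtain ⟨r, hr, hball⟩ := nhds_basis_closedBall.mem_iff.1 hnear
  have hunif := (tendstoLocallyUniformlyOn_iff_forall_isCompact hU).1 hconv _
    (fun w hw => (hball hw).1) (isCompact_closedBall w₀ r)
  obtain ⟨hne, hinv⟩ := tendstoUniformlyOn_inv_of_chordal_infty_lt (fun w hw => (hball hw).2) hunif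
  have hzero := eventually_eq_zero_of_tendstoUniformlyOn hr
    (hne.mono fun k hk => ⟨((hq k).mono fun w hw => (hball hw).1).inv hk,
      fun w hw => inv_ne_zero (hk w hw)⟩) hinv (by simp [hF])
  filter_upwards [hzero, closedBall_mem_nhds w₀ hr] with w hw hwB
  by_contra hfin
  have hbig : 1 ≤ ‖finitePart (F w)‖ := one_le_norm_of_chordal_infty_le <| by
    rw [coe_finitePart hfin]; linarith [(hball hwB).2]
  rw [inv_eq_zero.1 hw, norm_zero] at hbig
  linarith

theorem eq_infty_or_differentiableOn_of_tendstoLocallyUniformlyOn (hUo : IsOpen U)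
    (hUc : IsPreconnected U) (hq : ∀ k, DifferentiableOn ℂ (q k) U)
    (hconv : TendstoLocallyUniformlyOn (fun k w => toSphere (q k w)) (fun w => toSphere (F w))
      atTop U) :
    (∀ w ∈ U, F w = ∞) ∨ ∃ φ : ℂ → ℂ, DifferentiableOn ℂ φ U ∧ ∀ w ∈ U, F w = φ w := by
  have hFc := continuousOn_of_tendstoLocallyUniformlyOn_toSphere (fun k => (hq k).continuousOn)
    hconv
  have hloc : ∀ w₀ ∈ U, ∀ᶠ w in 𝓝[U] w₀, (F w₀ = ∞ ↔ F w = ∞) := by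
    intro w₀ hw₀
    by_cases h : F w₀ = ∞
    · filter_upwards [nhdsWithin_le_nhds
        (eventually_eq_infty_of_tendstoLocallyUniformlyOn hUo hq hconv hw₀ h)] with w hw
      simp [h, hw]
    · filter_upwards [hFc w₀ hw₀ (isOpen_compl_singleton.mem_nhds h)] with w hw
      exact iff_of_false h hw
  by_cases hinf : ∃ w₁ ∈ U, F w₁ = ∞
  · obtain ⟨w₁, hw₁, h₁⟩ := hinf
    exact .inl fun w hw => (hUc.induction₂ (fun a b => (F a = ∞ ↔ F b = ∞)) hloc
      (fun _ _ _ _ _ _ => Iff.trans) (fun _ _ _ _ => Iff.symm) hw₁ hw).1 h₁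
  push Not at hinf
  refine .inr ⟨fun w => finitePart (F w), ?_, fun w hw => (coe_finitePart (hinf w hw)).symm⟩
  have hφc : ContinuousOn (fun w => finitePart (F w)) U := fun w hw =>
    ContinuousAt.comp_continuousWithinAt (g := finitePart)
      (coe_finitePart (hinf w hw) ▸ continuousAt_finitePart _) (hFc w hw)
  refine (tendstoLocallyUniformlyOn_of_toSphere hφc (hconv.congr_right fun w hw => ?_)
    ).differentiableOn (Eventually.of_forall hq) hUo
  simp only [coe_finitePart (hinf w hw)]

end OneVariable

lemma MvPolynomial.differentiable_eval_update {𝕜 ι : Type*} [NontriviallyNormedField 𝕜]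
    [DecidableEq ι] (z : ι → 𝕜) (i : ι) (p : MvPolynomial ι 𝕜) :
    Differentiable 𝕜 fun w => MvPolynomial.eval (update z i w) p := by
  induction p using MvPolynomial.induction_on with
  | C a => simp
  | add p q hp hq =>
    simp only [map_add]
    exact hp.add hq
  | mul_X p j hp =>
    simp only [map_mul, MvPolynomial.eval_X]
    refine hp.mul ?_
    rcases eq_or_ne j i with rfl | hj
    · simp only [update_self]
      exact differentiable_id
    · simp [update_of_ne hj]

lemma eqOn_univ_pi_of_forall_update {ι : Type*} [DecidableEq ι] {X : ι → Type*}
    [∀ i, TopologicalSpace (X i)] {Y : Type*} [TopologicalSpace Y] [T1Space Y]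
    {s : ∀ i, Set (X i)} {f : (∀ i, X i) → Y} {c : Y} (hf : ContinuousOn f (pi univ s))
    (hupd : ∀ z ∈ pi univ s, f z = c → ∀ i, ∀ w ∈ s i, f (update z i w) = c)
    {z₀ : ∀ i, X i} (hz₀ : z₀ ∈ pi univ s) (hc : f z₀ = c) : ∀ z ∈ pi univ s, f z = c := by
  intro z hz
  have hpiece : ∀ I : Finset ι, f (I.piecewise z z₀) = c := by
    intro I
    induction I using Finset.induction_on with
    | empty => simpa using hc
    | insert i I _ ih =>
      rw [Finset.piecewise_insert]
      exact hupd _ (I.piecewise_mem_set_pi hz hz₀) ih i _ (hz i trivial)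
  -- the points `I.piecewise z z₀` accumulate at `z`
  by_contra hne
  obtain ⟨u, hu, hus⟩ := mem_nhdsWithin_iff_exists_mem_nhds_inter.1
    (hf z hz (isOpen_compl_singleton.mem_nhds hne))
  obtain ⟨I, hI⟩ := exists_finset_piecewise_mem_of_mem_nhds hu z₀
  exact hus ⟨hI, I.piecewise_mem_set_pi hz hz₀⟩ (hpiece I)

lemma IsJordanDomain.isOpen {G : Set ℂ} (hG : IsJordanDomain G) : IsOpen G := by
  obtain ⟨C, ⟨e⟩, -, z, -, rfl⟩ := hG
  have : CompactSpace C := e.compactSpace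
  exact (isCompact_iff_compactSpace.2 this).isClosed.isOpen_compl.connectedComponentIn

lemma IsJordanDomain.isPreconnected {G : Set ℂ} (hG : IsJordanDomain G) : IsPreconnected G := by
  obtain ⟨C, -, -, z, -, rfl⟩ := hG
  exact isPreconnected_connectedComponentIn

lemma eq_infty_or_differentiableOn_update {ι : Type*} [DecidableEq ι] {G : ι → Set ℂ}
    {P : ℕ → MvPolynomial ι ℂ} {f : (ι → ℂ) → OnePoint ℂ}
    (hunif : TendstoUniformlyOn (fun k z => toSphere ((MvPolynomial.eval z (P k) : ℂ) : OnePoint ℂ))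
      (fun z => toSphere (f z)) atTop (Set.pi univ G))
    {z : ι → ℂ} (hz : z ∈ Set.pi univ G) {i : ι} (hGo : IsOpen (G i))
    (hGc : IsPreconnected (G i)) :
    (∀ w ∈ G i, f (update z i w) = ∞) ∨
      ∃ φ : ℂ → ℂ, DifferentiableOn ℂ φ (G i) ∧ ∀ w ∈ G i, f (update z i w) = φ w := by
  refine eq_infty_or_differentiableOn_of_tendstoLocallyUniformlyOn hGo hGc
    (fun k => (MvPolynomial.differentiable_eval_update z i (P k)).differentiableOn) ?_
  rw [← update_preimage_univ_pi fun j _ => hz j trivial] at hGo ⊢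
  exact (hunif.comp (update z i)).tendstoLocallyUniformlyOn

/-- If `Gᵢ ⊂ ℂ` are Jordan domains and `f : ∏ᵢ closure Gᵢ → ℂ ∪ {∞}` is a uniform limit, with
respect to the chordal metric, of polynomials on `∏ᵢ closure Gᵢ`, then either `f ≡ ∞`, or `f`
is continuous on `∏ᵢ closure Gᵢ`, finite on `∏ᵢ Gᵢ`, and separately holomorphic on `∏ᵢ Gᵢ`. -/
theorem stmt17 {I : Type*} [DecidableEq I] (G : I → Set ℂ)
    (hG : ∀ i, IsJordanDomain (G i))
    (P : ℕ → MvPolynomial I ℂ) (f : (I → ℂ) → OnePoint ℂ)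
    (hconv : ∀ ε > 0, ∃ K : ℕ, ∀ k ≥ K,
      ∀ z ∈ Set.pi Set.univ fun i => closure (G i),
        chordal ((MvPolynomial.eval z (P k) : ℂ) : OnePoint ℂ) (f z) < ε) :
    (∀ z ∈ Set.pi Set.univ fun i => closure (G i), f z = OnePoint.infty) ∨
    (ContinuousOn f (Set.pi Set.univ fun i => closure (G i)) ∧
      ∃ g : (I → ℂ) → ℂ,
        (∀ z ∈ Set.pi Set.univ G, f z = (g z : OnePoint ℂ)) ∧
        ∀ z ∈ Set.pi Set.univ G, ∀ i : I,
          DifferentiableAt ℂ (fun w => g (Function.update z i w)) (z i)) := by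
  have hGK : Set.pi univ G ⊆ Set.pi univ fun i => closure (G i) := pi_mono fun i _ => subset_closure
  have hunif : TendstoUniformlyOn
      (fun k z => toSphere ((MvPolynomial.eval z (P k) : ℂ) : OnePoint ℂ))
      (fun z => toSphere (f z)) atTop (Set.pi univ fun i => closure (G i)) :=
    tendstoUniformlyOn_toSphere_iff.2 fun ε hε => eventually_atTop.2 (hconv ε hε)
  have hcont := continuousOn_of_tendstoLocallyUniformlyOn_toSphere
    (fun k => (MvPolynomial.continuous_eval (P k)).continuousOn) hunif.tendstoLocallyUniformlyOn
  have hslice := fun z (hz : z ∈ Set.pi univ G) i =>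
    eq_infty_or_differentiableOn_update (hunif.mono hGK) hz (hG i).isOpen (hG i).isPreconnected
  by_cases hinf : ∃ z₀ ∈ Set.pi univ G, f z₀ = ∞
  · obtain ⟨z₀, hz₀, hf₀⟩ := hinf
    have hD := eqOn_univ_pi_of_forall_update (hcont.mono hGK) (fun z hz hfz i =>
      (hslice z hz i).resolve_right fun ⟨φ, _, hφ⟩ => by
        simpa [hfz] using hφ (z i) (hz i trivial)) hz₀ hf₀
    exact .inl <| EqOn.of_subset_closure hD hcont continuousOn_const hGK (closure_pi_set _ _).ge
  push Not at hinf
  refine .inr ⟨hcont, fun z => finitePart (f z), fun z hz => (coe_finitePart (hinf z hz)).symm,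
    fun z hz i => ?_⟩
  obtain ⟨φ, hφ, hfφ⟩ := (hslice z hz i).resolve_left fun h => hinf z hz (by
    simpa using h (z i) (hz i trivial))
  have hGi := (hG i).isOpen.mem_nhds (hz i trivial)
  refine (hφ.differentiableAt hGi).congr_of_eventuallyEq ?_
  filter_upwards [hGi] with w hw
  simp [hfφ w hw]
end
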